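/- arXiv:2103.07305 — 2 statements merged into one kernel-verified Lean document; each statement's English description precedes it below -/
import Mathlib

section
/- Let R be a commutative ring and C a finite étale R-algebra of constant rank N ≥ 1. Then the diagonal multiplication map C ⊗_R C → C induces a decomposition C ⊗_R C ≅ C × C' of C-algebras, where C' is a finite étale C-algebra of constant rank N − 1. -/
/-!
Since `C` is unramified over `R`, the kernel `I` of the multiplication map `C ⊗[R] C → C` is a
finitely generated ideal with `I / I² = Ω[C⁄R] = 0`, hence generated by an idempotent `e`, and
`C ⊗[R] C ≅ C × C'` with `C' = (C ⊗[R] C) ⧸ (1 - e)`. This `C'` is étale over `C ⊗[R] C`, hence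
over `C`, and finite as a quotient of `C ⊗[R] C`; being flat and finitely presented it is
projective. As `C ⊗[R] C` is the base change of `C` along `R → C`, its rank at every prime of `C`
is `N`, and splitting off the factor `C` of rank `1` leaves rank `N - 1` for `C'`.
-/

open scoped TensorProduct

theorem Ideal.isIdempotentElem_span_singleton {A : Type*} [CommRing A] {e : A}
    (he : IsIdempotentElem e) : IsIdempotentElem (Ideal.span {e}) :=
  (Ideal.isIdempotentElem_iff_of_fg _ (Submodule.fg_span_singleton e)).mpr ⟨e, he, rfl⟩

theorem Algebra.Etale.quotient_span_singleton_of_isIdempotentElem {A : Type*} [CommRing A]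
    {e : A} (he : IsIdempotentElem e) : Algebra.Etale A (A ⧸ Ideal.span {e}) where
  formallyEtale := by
    rw [Algebra.FormallyEtale.iff_of_surjective Ideal.Quotient.mk_surjective,
      Ideal.Quotient.algebraMap_eq, Ideal.mk_ker]
    exact Ideal.isIdempotentElem_span_singleton he
  finitePresentation := .quotient (Submodule.fg_span_singleton e)

theorem Algebra.FormallyUnramified.exists_isIdempotentElem_ker_lmul''_eq_span
    (R S : Type*) [CommRing R] [CommRing S] [Algebra R S] [Algebra.EssFiniteType R S]
    [Algebra.FormallyUnramified R S] :
    ∃ e, IsIdempotentElem e ∧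
      RingHom.ker (Algebra.TensorProduct.lmul'' R (S := S)) = Ideal.span {e} :=
  (Ideal.isIdempotentElem_iff_of_fg _ (KaehlerDifferential.ideal_fg R S)).mp <|
    (Ideal.cotangent_subsingleton_iff _).mp <| inferInstanceAs <| Subsingleton Ω[S⁄R]

section prodQuotient

variable {R A B : Type*} [CommRing R] [CommRing A] [CommRing B] [Algebra R A] [Algebra R B]
  (f : A →ₐ[R] B) (hf : Function.Surjective f) {e : A} (he : IsIdempotentElem e)
  (hker : RingHom.ker f = Ideal.span {e})

noncomputable def AlgEquiv.prodQuotientOfKerEqSpan : A ≃ₐ[R] B × (A ⧸ Ideal.span {1 - e}) :=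
  (AlgEquiv.prodQuotientOfIsIdempotentElem R he he.one_sub (by simp) (by simp [he])).trans <|
    AlgEquiv.prodCongr (((Ideal.span {e}).quotientEquivAlgOfEq R hker.symm).trans
      (Ideal.quotientKerAlgEquivOfSurjective hf)) AlgEquiv.refl

theorem AlgEquiv.prodQuotientOfKerEqSpan_apply_fst (x : A) :
    (AlgEquiv.prodQuotientOfKerEqSpan f hf he hker x).1 = f x :=
  rfl

end prodQuotient

theorem tensor_self_decomposition_of_finite_etale_general
    (R C : Type) [CommRing R] [CommRing C] [Algebra R C]
    [Algebra.Etale R C] [Module.Finite R C]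
    (N : ℕ)
    (hrank : ∀ p : PrimeSpectrum R, Module.rankAtStalk C p = N) :
    ∃ (C' : Type) (_ : CommRing C') (_ : Algebra C C'),
      Algebra.Etale C C' ∧ Module.Finite C C' ∧ Module.Projective C C' ∧
      (∀ q : PrimeSpectrum C, Module.rankAtStalk C' q = N - 1) ∧
      ∃ e : (C ⊗[R] C) ≃ₐ[C] C × C', ∀ x y : C, (e (x ⊗ₜ[R] y)).1 = x * y := by
  obtain ⟨e, he, hker⟩ :=
    Algebra.FormallyUnramified.exists_isIdempotentElem_ker_lmul''_eq_span R C
  let C' := C ⊗[R] C ⧸ Ideal.span {1 - e}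
  have : Algebra.Etale (C ⊗[R] C) C' :=
    Algebra.Etale.quotient_span_singleton_of_isIdempotentElem he.one_sub
  have : Algebra.Etale C C' := .comp C (C ⊗[R] C) C'
  have : Module.FinitePresentation C C' := .of_finite_of_finitePresentation C C'
  let E := AlgEquiv.prodQuotientOfKerEqSpan (Algebra.TensorProduct.lmul'' R (S := C))
    (fun x ↦ ⟨x ⊗ₜ 1, (Algebra.TensorProduct.lmul'_apply_tmul x 1).trans (mul_one x)⟩) he hker
  refine ⟨C', inferInstance, inferInstance, inferInstance, inferInstance,
    Module.Flat.projective_of_finitePresentation, fun q ↦ ?_, E, fun x y ↦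
      (AlgEquiv.prodQuotientOfKerEqSpan_apply_fst _ _ he hker _).trans
        (Algebra.TensorProduct.lmul'_apply_tmul x y)⟩
  have : Nontrivial C := q.nontrivial
  have h : N = Module.rankAtStalk C q + Module.rankAtStalk C' q := by
    rw [← hrank (q.comap (algebraMap R C)), ← Module.rankAtStalk_baseChange, ← Pi.add_apply,
      ← Module.rankAtStalk_prod, Module.rankAtStalk_eq_of_equiv E.toLinearEquiv]
  rw [h, Module.rankAtStalk_self, Pi.one_apply, Nat.add_sub_cancel_left]

/-- For a finite étale `R`-algebra `C` of constant rank `N ≥ 1`, the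
`C`-algebra `C ⊗[R] C` (via the left factor) decomposes as `C × C'` where `C'` is a finite
étale `C`-algebra of constant rank `N - 1`, the projection to the first factor being the
multiplication map `x ⊗ y ↦ x * y`. -/
theorem tensor_self_decomposition_of_finite_etale
    (R C : Type) [CommRing R] [CommRing C] [Algebra R C]
    [Algebra.Etale R C] [Module.Finite R C] [Module.Projective R C]
    (N : ℕ) (hN : 1 ≤ N)
    (hrank : ∀ p : PrimeSpectrum R, Module.rankAtStalk C p = N) :
    ∃ (C' : Type) (_ : CommRing C') (_ : Algebra C C'),
      Algebra.Etale C C' ∧ Module.Finite C C' ∧ Module.Projective C C' ∧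
      (∀ q : PrimeSpectrum C, Module.rankAtStalk C' q = N - 1) ∧
      ∃ e : (C ⊗[R] C) ≃ₐ[C] C × C', ∀ x y : C, (e (x ⊗ₜ[R] y)).1 = x * y :=
  tensor_self_decomposition_of_finite_etale_general R C N hrank
end

section
/- Let R be a commutative ring and V a finitely generated projective faithful R-module. Then End_R(V) is a separable R-algebra, i.e. End_R(V) is projective as a module over End_R(V) ⊗_R End_R(V)^op. -/
/-!
A separability idempotent `e ∈ B ⊗ Bᵐᵒᵖ`, i.e. one with `μ e = 1` and `(c ⊗ 1) e = (1 ⊗ c) e`,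
makes `t ↦ (t ⊗ 1) e` a bimodule splitting of the multiplication map `μ : B ⊗ Bᵐᵒᵖ → B`, so `B`
is a direct summand of a free `B ⊗ Bᵐᵒᵖ`-module.

For `B = End_R(V)` take a dual basis `(xᵢ, fᵢ)` of `V`. The ideal generated by the values `fᵢ(v)`
satisfies `I • V = V`, so by Nakayama and faithfulness it is `R`: `∑ fᵢ(wᵢ) = 1` for some `wᵢ`.
With `θ(x, f) = (v ↦ f(v) x)`, the element `e = ∑_{k,i} θ(xᵢ, f_k) ⊗ θ(w_k, fᵢ)` has
`μ e = ∑ f_k(w_k) ∑ θ(xᵢ, fᵢ) = 1`, and `(c ⊗ 1) e = (1 ⊗ c) e` follows from the invariance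
`∑ c xᵢ ⊗ fᵢ = ∑ xᵢ ⊗ fᵢ ∘ c` of the canonical element of `V ⊗ V^*`.
-/

open scoped TensorProduct

/-- An `R`-algebra `B` is *separable* if `B` is projective as a module over its enveloping
algebra `B ⊗[R] Bᵐᵒᵖ`, acting by `(a ⊗ b) • x = a * x * b`. -/
def IsSeparableAlgebra (R B : Type) [CommRing R] [Ring B] [Algebra R B] : Prop :=
  letI : Module (B ⊗[R] Bᵐᵒᵖ) B := TensorProduct.Algebra.module
  Module.Projective (B ⊗[R] Bᵐᵒᵖ) B

open MulOpposite

structure IsSeparabilityIdempotent (R : Type*) {B : Type*} [CommSemiring R] [Semiring B]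
    [Algebra R B] (e : B ⊗[R] Bᵐᵒᵖ) : Prop where
  mulLeftRight_one : AlgHom.mulLeftRight R B e 1 = 1
  tmul_one_mul : ∀ c : B, (c ⊗ₜ[R] (1 : Bᵐᵒᵖ)) * e = (1 ⊗ₜ op c) * e

theorem IsSeparabilityIdempotent.mulLeftRight_tmul_one_mul {R B : Type*} [CommSemiring R]
    [Semiring B] [Algebra R B] {e : B ⊗[R] Bᵐᵒᵖ} (he : IsSeparabilityIdempotent R e)
    (z : B ⊗[R] Bᵐᵒᵖ) (t : B) :
    (AlgHom.mulLeftRight R B z t ⊗ₜ[R] (1 : Bᵐᵒᵖ)) * e = z * ((t ⊗ₜ 1) * e) := by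
  induction z using TensorProduct.induction_on with
  | zero => simp
  | add z₁ z₂ h₁ h₂ =>
    simp only [map_add, LinearMap.add_apply, TensorProduct.add_tmul, add_mul, h₁, h₂]
  | tmul p q =>
    rw [AlgHom.mulLeftRight_apply]
    calc ((p * t * unop q) ⊗ₜ[R] (1 : Bᵐᵒᵖ)) * e
        = ((p * t) ⊗ₜ[R] (1 : Bᵐᵒᵖ)) * ((unop q ⊗ₜ 1) * e) := by
          rw [← mul_assoc, Algebra.TensorProduct.tmul_mul_tmul, mul_one]
      _ = ((p * t) ⊗ₜ[R] (1 : Bᵐᵒᵖ)) * ((1 ⊗ₜ q) * e) := by rw [he.tmul_one_mul, op_unop]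
      _ = (p ⊗ₜ q) * ((t ⊗ₜ 1) * e) := by
          simp only [← mul_assoc, Algebra.TensorProduct.tmul_mul_tmul, mul_one, one_mul]

theorem IsSeparabilityIdempotent.isSeparableAlgebra {R B : Type} [CommRing R] [Ring B]
    [Algebra R B] {e : B ⊗[R] Bᵐᵒᵖ} (he : IsSeparabilityIdempotent R e) :
    IsSeparableAlgebra R B := by
  let _ := instModuleTensorProductMop R B
  let σ : B →ₗ[B ⊗[R] Bᵐᵒᵖ] B ⊗[R] Bᵐᵒᵖ :=
    { toFun t := (t ⊗ₜ 1) * e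
      map_add' t s := by simp only [TensorProduct.add_tmul, add_mul]
      map_smul' z t := he.mulLeftRight_tmul_one_mul z t }
  refine .of_split σ (LinearMap.toSpanSingleton _ B 1) (LinearMap.ext fun t => ?_)
  change ((t ⊗ₜ[R] (1 : Bᵐᵒᵖ)) * e) • (1 : B) = t
  rw [mul_smul]
  change AlgHom.mulLeftRight R B (t ⊗ₜ[R] (1 : Bᵐᵒᵖ)) (AlgHom.mulLeftRight R B e 1) = t
  simp [he.mulLeftRight_one]

namespace LinearMap

variable {R M M₁ M₂ : Type*} [CommSemiring R] [AddCommMonoid M] [AddCommMonoid M₁]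
  [AddCommMonoid M₂] [Module R M] [Module R M₁] [Module R M₂]

theorem smulRight_comp (f : M₁ →ₗ[R] R) (x : M) (g : M₂ →ₗ[R] M₁) :
    f.smulRight x ∘ₗ g = (f ∘ₗ g).smulRight x :=
  rfl

theorem comp_smulRight (g : M →ₗ[R] M₂) (f : M₁ →ₗ[R] R) (x : M) :
    g ∘ₗ f.smulRight x = f.smulRight (g x) := by
  ext v; simp

theorem smulRight_comp_smulRight (f : M₁ →ₗ[R] R) (x : M) (g : M₂ →ₗ[R] R) (y : M₁) :
    f.smulRight x ∘ₗ g.smulRight y = f y • g.smulRight x := by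
  ext v; simp [smul_smul, mul_comm]

end LinearMap

theorem Module.Finite.exists_dual_basis_of_projective (R V : Type*) [CommRing R]
    [AddCommGroup V] [Module R V] [Module.Finite R V] [Module.Projective R V] :
    ∃ (n : ℕ) (x : Fin n → V) (f : Fin n → Module.Dual R V), ∀ v, ∑ i, f i v • x i = v := by
  obtain ⟨n, p, q, -, -, hpq⟩ := Module.Finite.exists_comp_eq_id_of_projective R V
  refine ⟨n, fun i => p fun j => if i = j then 1 else 0, fun i => LinearMap.proj i ∘ₗ q,
    fun v => ?_⟩
  have hv : p (q v) = v := LinearMap.congr_fun hpq v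
  simpa [hv] using (p.pi_apply_eq_sum_univ (q v)).symm

theorem Ideal.eq_top_of_top_le_smul_top {R : Type*} (V : Type*) [CommRing R] [AddCommGroup V]
    [Module R V] [Module.Finite R V] [FaithfulSMul R V] {I : Ideal R}
    (h : (⊤ : Submodule R V) ≤ I • ⊤) : I = ⊤ := by
  obtain ⟨r, hrI, hr⟩ := Submodule.exists_mem_and_smul_eq_self_of_fg_of_le_smul I ⊤
    Module.Finite.fg_top h
  have hr1 : r = 1 := eq_of_smul_eq_smul (α := V) fun v => by rw [hr v trivial, one_smul]
  exact I.eq_top_iff_one.2 (hr1 ▸ hrI)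

section DualBasis

variable {R V : Type*} [CommRing R] [AddCommGroup V] [Module R V]
  {ι : Type*} [Fintype ι] {x : ι → V} {f : ι → Module.Dual R V}

theorem exists_sum_apply_eq_one_of_sum_smul_eq [Module.Finite R V] [FaithfulSMul R V]
    (hdual : ∀ v, ∑ i, f i v • x i = v) : ∃ w : ι → V, ∑ i, f i (w i) = 1 := by
  classical
  let φ : (ι → V) →ₗ[R] R := ∑ i, f i ∘ₗ LinearMap.proj i
  have hφ : ∀ w, φ w = ∑ i, f i (w i) := by simp [φ]
  have hmem : ∀ i v, f i v ∈ LinearMap.range φ := fun i v =>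
    ⟨Pi.single i v, by simp [hφ, Pi.single_apply, apply_ite]⟩
  have htop : (⊤ : Submodule R V) ≤ LinearMap.range φ • ⊤ := fun v _ =>
    hdual v ▸ Submodule.sum_mem _ fun i _ => Submodule.smul_mem_smul (hmem i v) trivial
  obtain ⟨w, hw⟩ : (1 : R) ∈ LinearMap.range φ := by
    rw [Ideal.eq_top_of_top_le_smul_top V htop]; trivial
  exact ⟨w, (hφ w).symm.trans hw⟩

theorem sum_apply_tmul_eq_sum_tmul_comp (hdual : ∀ v, ∑ i, f i v • x i = v)
    (c : Module.End R V) :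
    ∑ i, c (x i) ⊗ₜ[R] f i = ∑ i, x i ⊗ₜ[R] (f i ∘ₗ c) := by
  have hcomp : ∀ j, f j ∘ₗ c = ∑ i, f j (c (x i)) • f i := fun j => by
    ext v
    conv_lhs => rw [LinearMap.comp_apply, ← hdual v]
    simp [mul_comm]
  calc ∑ i, c (x i) ⊗ₜ[R] f i
      = ∑ i, ∑ j, f j (c (x i)) • (x j ⊗ₜ[R] f i) := by
        refine Finset.sum_congr rfl fun i _ => ?_
        conv_lhs => rw [← hdual (c (x i))]
        simp [TensorProduct.sum_tmul, TensorProduct.smul_tmul']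
    _ = ∑ j, ∑ i, f j (c (x i)) • (x j ⊗ₜ[R] f i) := Finset.sum_comm
    _ = ∑ j, x j ⊗ₜ[R] (f j ∘ₗ c) := by
        simp [hcomp, TensorProduct.tmul_sum, TensorProduct.tmul_smul]

theorem isSeparabilityIdempotent_sum_smulRight_tmul (hdual : ∀ v, ∑ i, f i v • x i = v)
    {w : ι → V} (hw : ∑ i, f i (w i) = 1) :
    IsSeparabilityIdempotent R (∑ k, ∑ i, ((f k).smulRight (x i) : Module.End R V) ⊗ₜ[R]
      op ((f i).smulRight (w k) : Module.End R V)) where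
  mulLeftRight_one := by
    have hone : ∑ i, ((f i).smulRight (x i) : Module.End R V) = 1 :=
      LinearMap.ext fun v => by simpa using hdual v
    simp only [map_sum, LinearMap.sum_apply, AlgHom.mulLeftRight_apply, mul_one, unop_op,
      Module.End.mul_eq_comp, LinearMap.smulRight_comp_smulRight]
    rw [← hone, ← Finset.sum_smul_sum, hw, one_smul]
  tmul_one_mul c := by
    simp only [Finset.mul_sum, Algebra.TensorProduct.tmul_mul_tmul, one_mul, ← op_mul]
    refine Finset.sum_congr rfl fun k _ => ?_
    -- the `k`-th summand is the image of the canonical element `∑ i, x i ⊗ f i` of `V ⊗ V^*`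
    have hk := congrArg (TensorProduct.map (LinearMap.smulRightₗ (f k))
      ((opLinearEquiv R).toLinearMap ∘ₗ LinearMap.smulRightₗ.flip (w k)))
      (sum_apply_tmul_eq_sum_tmul_comp hdual c)
    simpa [map_sum, TensorProduct.map_tmul, LinearMap.comp_smulRight, LinearMap.smulRight_comp,
      Module.End.mul_eq_comp] using hk

end DualBasis

/-- For a finitely generated projective faithful `R`-module `V`, the
endomorphism algebra `End_R(V)` is a separable `R`-algebra. -/
theorem isSeparableAlgebra_end
    (R V : Type) [CommRing R] [AddCommGroup V] [Module R V]
    [Module.Finite R V] [Module.Projective R V] [FaithfulSMul R V] :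
    IsSeparableAlgebra R (Module.End R V) := by
  obtain ⟨n, x, f, hdual⟩ := Module.Finite.exists_dual_basis_of_projective R V
  obtain ⟨w, hw⟩ := exists_sum_apply_eq_one_of_sum_smul_eq hdual
  exact (isSeparabilityIdempotent_sum_smulRight_tmul hdual hw).isSeparableAlgebra
end
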